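/- arXiv:math/0005199 — 3 statements merged into one kernel-verified Lean document; each statement's English description precedes it below -/
import Mathlib

section
/- Let $K$ be an $(n-1)$-dimensional simplicial complex on $m$ vertices with face numbers $f_{-1}=1, f_0, \ldots, f_{n-1}$ (and $f_j=0$ for $j\ge n$), and define $\chi_p = \sum_{j=0}^{m} (-1)^{p-j} f_{j-1} \binom{m-j}{p-j}$ for $0 \le p \le m$. Then $\sum_{p=0}^m \chi_p t^{2p} = (1-t^2)^{m-n}\,(h_0 + h_1 t^2 + \cdots + h_n t^{2n})$ as polynomials, where $(h_0,\ldots,h_n)$ is the h-vector of $K$. -/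
/-!
Substituting `x = t²`, the claim reads `∑ χ_p x^p = (1 - x)^(m-n) h(x)`. Since
`(-1)^(p-j) binom(m-j, p-j)` is the coefficient of `x^p` in `x^j (1 - x)^(m-j)`, the left side is
`∑_j f_{j-1} x^j (1 - x)^(m-j)`, and reflecting the defining identity of the h-vector gives
`h(x) = ∑_i f_{i-1} x^i (1 - x)^(n-i)`.
-/

open Finset Polynomial

namespace Polynomial

variable {R : Type*}

theorem reflect_finset_sum [Semiring R] {ι : Type*} (s : Finset ι) (g : ι → R[X]) (N : ℕ) :
    reflect N (∑ i ∈ s, g i) = ∑ i ∈ s, reflect N (g i) :=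
  map_sum (⟨⟨reflect N, reflect_zero⟩, fun p q => reflect_add p q N⟩ : R[X] →+ R[X]) g s

theorem reflect_pow_of_natDegree_le [Semiring R] {p : R[X]} {N : ℕ} (hp : p.natDegree ≤ N)
    (k : ℕ) :
    reflect (N * k) (p ^ k) = reflect N p ^ k := by
  induction k with
  | zero => simp [reflect_one]
  | succ k ih =>
    rw [pow_succ, pow_succ, Nat.mul_succ,
      reflect_mul _ _ ((natDegree_pow_le_of_le k hp).trans_eq (mul_comm k N)) hp, ih]

theorem natDegree_X_sub_one_le [Ring R] : (X - 1 : R[X]).natDegree ≤ 1 := by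
  simpa using natDegree_X_sub_C_le (1 : R)

theorem reflect_X_sub_one_pow [Ring R] (k : ℕ) :
    reflect k ((X - 1 : R[X]) ^ k) = (1 - X) ^ k := by
  simpa [reflect_sub, reflect_one] using reflect_pow_of_natDegree_le natDegree_X_sub_one_le k

theorem one_sub_X_pow_eq_sum [CommRing R] (M : ℕ) :
    (1 - X : R[X]) ^ M = ∑ q ∈ range (M + 1), C ((-1) ^ q * (M.choose q : R)) * X ^ q := by
  rw [sub_eq_neg_add, add_pow]
  refine sum_congr rfl fun q _ => ?_
  rw [one_pow, mul_one, neg_pow, map_mul, map_pow, map_neg, map_one, map_natCast]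
  ring

theorem X_pow_mul_one_sub_X_pow_eq_sum_Ico [CommRing R] {j M : ℕ} (hj : j ≤ M) :
    X ^ j * (1 - X : R[X]) ^ (M - j)
      = ∑ p ∈ Ico j (M + 1), C ((-1) ^ (p - j) * ((M - j).choose (p - j) : R)) * X ^ p := by
  rw [one_sub_X_pow_eq_sum, mul_sum, sum_Ico_eq_sum_range, Nat.sub_add_comm hj]
  refine sum_congr rfl fun q _ => ?_
  rw [Nat.add_sub_cancel_left, pow_add]
  ring

end Polynomial

section HPolynomial

variable {R : Type*} [CommRing R]

/-- With `f i = f_{i-1}` the face numbers of an `(n-1)`-dimensional complex, this is its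
h-polynomial `h_0 + h_1 X + ⋯ + h_n X^n`. -/
noncomputable def hPolynomial (f : ℕ → R) (n : ℕ) : R[X] :=
  ∑ i ∈ range (n + 1), C (f i) * X ^ i * (1 - X) ^ (n - i)

theorem sum_C_mul_X_pow_eq_hPolynomial {f h : ℕ → R} {n : ℕ}
    (hh : ∑ k ∈ range (n + 1), C (h k) * X ^ (n - k)
        = ∑ i ∈ range (n + 1), C (f i) * (X - 1) ^ (n - i)) :
    ∑ k ∈ range (n + 1), C (h k) * X ^ k = hPolynomial f n := by
  have hrefl := congrArg (reflect n) hh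
  simp only [reflect_finset_sum] at hrefl
  convert hrefl using 1 <;> refine sum_congr rfl fun i hi => ?_
  · rw [reflect_C_mul_X_pow, revAt_le (by omega), Nat.sub_sub_self (by simp at hi; omega)]
  · obtain ⟨d, rfl⟩ : ∃ d, n = i + d := ⟨n - i, by simp at hi; omega⟩
    have hdeg : ((X - 1 : R[X]) ^ d).natDegree ≤ d :=
      (natDegree_pow_le_of_le d natDegree_X_sub_one_le).trans_eq (mul_one d)
    rw [Nat.add_sub_cancel_left, reflect_mul _ _ ((natDegree_C _).trans_le (Nat.zero_le i)) hdeg,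
      reflect_C, reflect_X_sub_one_pow]

theorem sum_alternating_choose_eq_hPolynomial (f : ℕ → R) (m : ℕ) :
    ∑ p ∈ range (m + 1),
        C (∑ j ∈ range (p + 1), (-1) ^ (p - j) * f j * ((m - j).choose (p - j) : R)) * X ^ p
      = hPolynomial f m := by
  simp only [map_sum, sum_mul, range_eq_Ico, hPolynomial]
  rw [← sum_Ico_Ico_comm]
  refine sum_congr rfl fun j hj => ?_
  rw [mul_assoc, X_pow_mul_one_sub_X_pow_eq_sum_Ico (by simp at hj; omega), mul_sum]
  refine sum_congr rfl fun p _ => ?_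
  simp only [map_mul]
  ring

theorem hPolynomial_eq_one_sub_X_pow_mul {f : ℕ → R} {n m : ℕ} (hnm : n ≤ m)
    (hfz : ∀ j, n < j → f j = 0) :
    hPolynomial f m = (1 - X) ^ (m - n) * hPolynomial f n := by
  rw [hPolynomial, hPolynomial, mul_sum,
    ← sum_subset (range_subset_range.2 (Nat.succ_le_succ hnm))
      fun j _ hj => by simp [hfz j (by simpa using hj)]]
  refine sum_congr rfl fun i hi => ?_
  rw [show m - i = (m - n) + (n - i) by simp at hi; omega, pow_add]
  ring

end HPolynomial

theorem stmt_4_general (m n : ℕ) (hmn : n ≤ m) (f h : ℕ → ℤ)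
    (hfz : ∀ j, n < j → f j = 0)
    (hh : ∑ k ∈ Finset.range (n + 1), C (h k) * X ^ (n - k)
        = ∑ i ∈ Finset.range (n + 1), C (f i) * (X - 1) ^ (n - i)) :
    ∑ p ∈ Finset.range (m + 1),
        C (∑ j ∈ Finset.range (p + 1),
            (-1 : ℤ) ^ (p - j) * f j * ((m - j).choose (p - j))) * X ^ (2 * p)
      = (1 - X ^ 2) ^ (m - n) * ∑ i ∈ Finset.range (n + 1), C (h i) * X ^ (2 * i) := by
  have key : ∑ p ∈ range (m + 1),
        C (∑ j ∈ range (p + 1), (-1) ^ (p - j) * f j * ((m - j).choose (p - j) : ℤ)) * X ^ p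
      = (1 - X) ^ (m - n) * ∑ i ∈ range (n + 1), C (h i) * X ^ i := by
    rw [sum_alternating_choose_eq_hPolynomial, hPolynomial_eq_one_sub_X_pow_mul hmn hfz,
      sum_C_mul_X_pow_eq_hPolynomial hh]
  simpa [pow_mul] using congrArg (expand ℤ 2) key

/-- Generating polynomial of the Euler characteristics of the bigraded components of the
cellular chain complex of the moment-angle complex `Z_K`:
`∑_p χ_p t^{2p} = (1-t²)^{m-n} (h_0 + h_1 t² + ⋯ + h_n t^{2n})`.
Here `f j` denotes `f_{j-1}` (so `f 0 = 1`, and `f j = 0` for `j > n`), and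
`χ_p = ∑_{j=0}^{p} (-1)^{p-j} f_{j-1} binom(m-j, p-j)`. -/
theorem stmt_4 (m n : ℕ) (hmn : n ≤ m) (f h : ℕ → ℤ) (hf : f 0 = 1)
    (hfz : ∀ j, n < j → f j = 0)
    (hh : ∑ k ∈ Finset.range (n + 1), C (h k) * X ^ (n - k)
        = ∑ i ∈ Finset.range (n + 1), C (f i) * (X - 1) ^ (n - i)) :
    ∑ p ∈ Finset.range (m + 1),
        C (∑ j ∈ Finset.range (p + 1),
            (-1 : ℤ) ^ (p - j) * f j * ((m - j).choose (p - j))) * X ^ (2 * p)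
      = (1 - X ^ 2) ^ (m - n) * ∑ i ∈ Finset.range (n + 1), C (h i) * X ^ (2 * i) :=
  stmt_4_general m n hmn f h hfz hh
end

section
/- Let $n \ge 1$ and suppose the h-vector $(h_0,\ldots,h_n)$ of an $(n-1)$-dimensional simplicial complex satisfies the polynomial identity $(1-t)^{m-n}\sum_i h_i t^i + (\chi-1)(1-t)^m = (1-t)^{m-n}\sum_i h_{n-i} t^i + (-1)^{n-1}(1-t)^m$ for some integers $m > n$ and $\chi$. Then $h_{n-i} - h_i = (-1)^i(\chi - 1 - (-1)^{n-1})\binom{n}{i}$ for all $0 \le i \le n$. -/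
/-!
Since `1 - X` is a non-zero-divisor, cancelling `(1 - X) ^ (m - n)` leaves
`∑ (h (n - i) - h i) X ^ i = C (χ - 1 - (-1) ^ (n - 1)) * (1 - X) ^ n`; comparing coefficients
with `[X ^ i] (1 - X) ^ n = (-1) ^ i * n.choose i` gives the claim.
-/

open Finset Polynomial

namespace Polynomial

variable {R : Type*} [CommRing R]

theorem coeff_one_sub_X_pow (n k : ℕ) :
    ((1 - X : R[X]) ^ n).coeff k = (-1) ^ k * n.choose k := by
  have hcomp : (1 - X : R[X]) ^ n = ((1 + X) ^ n).comp (C (-1) * X) := by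
    simp [sub_eq_add_neg]
  rw [hcomp, comp_C_mul_X_coeff, coeff_one_add_X_pow, mul_comm]

theorem isRegular_one_sub_X : IsRegular (1 - X : R[X]) := by
  have hneg : (1 - X : R[X]) = -1 * (X - C 1) := by simp
  rw [hneg]
  exact isUnit_one.neg.isRegular.mul (monic_X_sub_C (1 : R)).isRegular

theorem coeff_sum_range_C_mul_X_pow (a : ℕ → R) {n k : ℕ} (hk : k ≤ n) :
    (∑ i ∈ range (n + 1), C (a i) * X ^ i).coeff k = a k := by
  simp [finsetSum_coeff, Nat.lt_succ_iff.mpr hk]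

theorem sub_eq_C_mul_one_sub_X_pow_of_eq {m n : ℕ} (hnm : n ≤ m) {p q : R[X]} {a b : R}
    (h : (1 - X) ^ (m - n) * p + C a * (1 - X) ^ m = (1 - X) ^ (m - n) * q + C b * (1 - X) ^ m) :
    q - p = C (a - b) * (1 - X) ^ n := by
  have hm : (1 - X : R[X]) ^ m = (1 - X) ^ (m - n) * (1 - X) ^ n := by
    rw [← pow_add, Nat.sub_add_cancel hnm]
  apply (isRegular_one_sub_X.pow (m - n)).left
  rw [hm] at h
  dsimp only
  rw [C_sub]
  linear_combination -h

end Polynomial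

theorem stmt_6_general (m n : ℕ) (hmn : n < m) (χ : ℤ) (h : ℕ → ℤ)
    (hyp : (1 - X) ^ (m - n) * (∑ i ∈ Finset.range (n + 1), C (h i) * X ^ i)
            + C (χ - 1) * (1 - X) ^ m
         = (1 - X) ^ (m - n) * (∑ i ∈ Finset.range (n + 1), C (h (n - i)) * X ^ i)
            + C ((-1 : ℤ) ^ (n - 1)) * (1 - X) ^ m) :
    ∀ i, i ≤ n → h (n - i) - h i = (-1 : ℤ) ^ i * (χ - 1 - (-1 : ℤ) ^ (n - 1)) * n.choose i := by
  intro i hi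
  have hdiff := congrArg (coeff · i) (sub_eq_C_mul_one_sub_X_pow_of_eq hmn.le hyp)
  simp only [coeff_sub, coeff_sum_range_C_mul_X_pow _ hi, coeff_C_mul, coeff_one_sub_X_pow]
    at hdiff
  rw [hdiff]
  ring

/-- Algebraic core of the generalized Dehn–Sommerville equations: if
`(1-t)^{m-n} ∑ h_i t^i + (χ-1)(1-t)^m = (1-t)^{m-n} ∑ h_{n-i} t^i + (-1)^{n-1} (1-t)^m`
then `h_{n-i} - h_i = (-1)^i (χ - 1 - (-1)^{n-1}) binom(n, i)` for all `0 ≤ i ≤ n`. -/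
theorem stmt_6 (m n : ℕ) (hn : 1 ≤ n) (hmn : n < m) (χ : ℤ) (h : ℕ → ℤ)
    (hyp : (1 - X) ^ (m - n) * (∑ i ∈ Finset.range (n + 1), C (h i) * X ^ i)
            + C (χ - 1) * (1 - X) ^ m
         = (1 - X) ^ (m - n) * (∑ i ∈ Finset.range (n + 1), C (h (n - i)) * X ^ i)
            + C ((-1 : ℤ) ^ (n - 1)) * (1 - X) ^ m) :
    ∀ i, i ≤ n → h (n - i) - h i = (-1 : ℤ) ^ i * (χ - 1 - (-1 : ℤ) ^ (n - 1)) * n.choose i :=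
  stmt_6_general m n hmn χ h hyp
end

section
/- Let $K$ be a simplicial complex on $m$ vertices and let $\mathcal{C}^{-1,4}(K)$ be the span of monomials $v_i u_j$ with $i \ne j$, where $d(v_iu_j) = v_iv_j$ in the Stanley–Reisner ring and $d(u_iu_j) = v_iu_j - v_ju_i$. Then the dimension of the cohomology $H^{-1,4}$ of the Koszul complex equals $\binom{m}{2} - f_1(K)$, where $f_1(K)$ is the number of edges of $K$: the cocycles in bidegree $(-1,4)$ are spanned by $\{v_iu_j : \{i,j\} \notin K\}$, and $v_iu_j$ is cohomologous to $v_ju_i$ for each non-edge $\{i,j\}$. -/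
open Finset

variable (𝕜 : Type*) [Field 𝕜] (m : ℕ) (K : Finset (Finset (Fin m)))

/-- The Koszul differential `d : C^{-1,4} → C^{0,4}`, sending the basis element `v_i u_j`
(`i ≠ j`) to `v_i v_j` in the Stanley--Reisner ring: the coefficient of the (ordered
representative of the) monomial `v_i v_j` in `d(∑ x_{ij} v_i u_j)` is `x_{ij} + x_{ji}` when
`{i,j}` is an edge of `K`, and `v_i v_j = 0` when `{i,j}` is not a face of `K`. -/
noncomputable def dOne :
    (({q : Fin m × Fin m // q.1 ≠ q.2}) → 𝕜) →ₗ[𝕜] (Fin m × Fin m → 𝕜) where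
  toFun x := fun q =>
    if hq : q.1 ≠ q.2 ∧ ({q.1, q.2} : Finset (Fin m)) ∈ K then
      x ⟨q, hq.1⟩ + x ⟨(q.2, q.1), hq.1.symm⟩
    else 0
  map_add' x y := by
    funext q
    by_cases hq : q.1 ≠ q.2 ∧ ({q.1, q.2} : Finset (Fin m)) ∈ K <;>
      simp [hq] <;> ring
  map_smul' c x := by
    funext q
    by_cases hq : q.1 ≠ q.2 ∧ ({q.1, q.2} : Finset (Fin m)) ∈ K <;>
      simp [hq] <;> ring

/-- The Koszul differential `d : C^{-2,4} → C^{-1,4}`, sending the basis element `u_i u_j`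
(`i < j`) to `v_i u_j - v_j u_i`. -/
noncomputable def dZero :
    (({q : Fin m × Fin m // q.1 < q.2}) → 𝕜) →ₗ[𝕜] (({q : Fin m × Fin m // q.1 ≠ q.2}) → 𝕜) where
  toFun y := fun q =>
    if hq : q.1.1 < q.1.2 then y ⟨q.1, hq⟩
    else - y ⟨(q.1.2, q.1.1), lt_of_le_of_ne (not_lt.mp hq) q.2.symm⟩
  map_add' x y := by
    funext q
    by_cases hq : q.1.1 < q.1.2 <;> simp [hq] <;> ring
  map_smul' c x := by
    funext q
    by_cases hq : q.1.1 < q.1.2 <;> simp [hq] <;> ring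

/-!
A cochain `x` in bidegree `(-1,4)` is a cocycle iff `x_{ij} + x_{ji} = 0` for every edge `{i,j}`
of `K`, and a coboundary iff `x_{ij} + x_{ji} = 0` for all `i ≠ j`. So `x ↦ (x_{ij} + x_{ji})`,
indexed by the non-edges `i < j`, maps the cocycles onto `𝕜^{non-edges}` with kernel exactly the
coboundaries, and there are `binom(m,2) - f_1(K)` non-edges.
-/

lemma Finset.card_filter_lt_pair {α : Type*} [LinearOrder α] [Fintype α]
    (P : Finset α → Prop) [DecidablePred P] :
    #{q : α × α | q.1 < q.2 ∧ P {q.1, q.2}} = #{s ∈ univ.powersetCard 2 | P s} := by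
  refine card_bij (fun q _ => {q.1, q.2}) ?_ ?_ ?_
  · intro q hq
    simp only [mem_filter, mem_univ, true_and, mem_powersetCard_univ] at hq ⊢
    exact ⟨card_pair hq.1.ne, hq.2⟩
  · rintro ⟨a, b⟩ hab ⟨c, d⟩ hcd h
    simp only [mem_filter, mem_univ, true_and] at hab hcd
    simp only [Finset.ext_iff, mem_insert, mem_singleton] at h
    have := h a; have := h b; have := h c; have := h d
    grind
  · intro s hs
    simp only [mem_filter, mem_powersetCard_univ] at hs
    obtain ⟨⟨a, b, hab, rfl⟩, hP⟩ := And.imp_left card_eq_two.1 hs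
    rcases hab.lt_or_gt with h | h
    · exact ⟨(a, b), by simpa [h] using hP, rfl⟩
    · exact ⟨(b, a), by simpa [h, pair_comm] using hP, pair_comm b a⟩

section
variable {𝕜 m K}

lemma mem_ker_dOne_iff {x : {q : Fin m × Fin m // q.1 ≠ q.2} → 𝕜} :
    x ∈ LinearMap.ker (dOne 𝕜 m K) ↔
      ∀ q : {q : Fin m × Fin m // q.1 ≠ q.2}, {q.1.1, q.1.2} ∈ K →
        x q + x ⟨q.1.swap, q.2.symm⟩ = 0 := by
  simp only [LinearMap.mem_ker, funext_iff, dOne, LinearMap.coe_mk, AddHom.coe_mk,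
    Pi.zero_apply, dite_eq_right_iff, Subtype.forall, Prod.forall]
  grind

lemma mem_range_dZero_iff {x : {q : Fin m × Fin m // q.1 ≠ q.2} → 𝕜} :
    x ∈ LinearMap.range (dZero 𝕜 m) ↔
      ∀ q : {q : Fin m × Fin m // q.1 ≠ q.2}, x q + x ⟨q.1.swap, q.2.symm⟩ = 0 := by
  constructor
  · rintro ⟨y, rfl⟩ q
    rcases q with ⟨⟨i, j⟩, hij⟩
    rcases hij.lt_or_gt with h | h <;> simp [dZero, h, h.not_gt]
  · intro hx
    refine ⟨fun p => x ⟨p.1, p.2.ne⟩, funext fun q => ?_⟩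
    rcases q with ⟨⟨i, j⟩, hij⟩
    rcases hij.lt_or_gt with h | h
    · simp [dZero, h]
    · have hij := hx ⟨(i, j), hij⟩
      simp only [Prod.swap_prod_mk] at hij
      simp only [dZero, LinearMap.coe_mk, AddHom.coe_mk, h.not_gt, ↓reduceDIte]
      linear_combination -hij

variable (𝕜 m K) in
noncomputable def nonEdgeSum :
    LinearMap.ker (dOne 𝕜 m K) →ₗ[𝕜]
      ({q : Fin m × Fin m // q.1 < q.2 ∧ {q.1, q.2} ∉ K} → 𝕜) where
  toFun x q := x.1 ⟨q.1, q.2.1.ne⟩ + x.1 ⟨q.1.swap, q.2.1.ne'⟩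
  map_add' x y := by ext; simp only [Submodule.coe_add, Pi.add_apply]; ring
  map_smul' c x := by
    ext
    simp only [SetLike.val_smul, Pi.smul_apply, smul_eq_mul, RingHom.id_apply]
    ring

lemma ker_nonEdgeSum : LinearMap.ker (nonEdgeSum 𝕜 m K) =
    (LinearMap.range (dZero 𝕜 m)).comap (LinearMap.ker (dOne 𝕜 m K)).subtype := by
  ext ⟨x, hx⟩
  simp only [LinearMap.mem_ker, Submodule.mem_comap, Submodule.coe_subtype, mem_range_dZero_iff,
    funext_iff, Pi.zero_apply, nonEdgeSum, LinearMap.coe_mk, AddHom.coe_mk, Subtype.forall]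
  refine ⟨fun h q hq => ?_, fun h q hq => h _ _⟩
  by_cases hK : {q.1, q.2} ∈ K
  · exact mem_ker_dOne_iff.1 hx ⟨q, hq⟩ hK
  rcases hq.lt_or_gt with hlt | hgt
  · exact h q ⟨hlt, hK⟩
  · rw [pair_comm] at hK
    rw [add_comm]
    exact h q.swap ⟨hgt, hK⟩

lemma nonEdgeSum_surjective : Function.Surjective (nonEdgeSum 𝕜 m K) := by
  classical
  intro t
  let x : {q : Fin m × Fin m // q.1 ≠ q.2} → 𝕜 := fun q =>
    if h : q.1.1 < q.1.2 ∧ {q.1.1, q.1.2} ∉ K then t ⟨q.1, h⟩ else 0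
  have hx : x ∈ LinearMap.ker (dOne 𝕜 m K) := by
    refine mem_ker_dOne_iff.2 fun q hK => ?_
    have hK' : {q.1.2, q.1.1} ∈ K := pair_comm q.1.1 q.1.2 ▸ hK
    simp [x, hK, hK']
  refine ⟨⟨x, hx⟩, funext fun q => ?_⟩
  simp [nonEdgeSum, x, q.2.1, q.2.1.not_gt, q.2.2]

end

/-- Lemma 4.10(d): `dim H^{-1,4} = binom(m,2) - f_1(K)`; the cocycles in bidegree `(-1,4)`
are the `x` with `x_{ij} + x_{ji} = 0` for every edge `{i,j} ∈ K` (i.e. spanned by the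
`v_i u_j` with `{i,j} ∉ K` modulo the relations), and `v_i u_j` is cohomologous to `v_j u_i`
via the coboundaries `d(u_i u_j)`. -/
theorem stmt_19 :
    Module.finrank 𝕜
      (↥(LinearMap.ker (dOne 𝕜 m K)) ⧸
        (LinearMap.range (dZero 𝕜 m)).comap (LinearMap.ker (dOne 𝕜 m K)).subtype)
    = m.choose 2 - (K.filter (fun s => s.card = 2)).card := by
  classical
  have edges : {s ∈ (univ : Finset (Fin m)).powersetCard 2 | s ∈ K} =
      K.filter (fun s => s.card = 2) := by
    ext s
    simp [and_comm]
  rw [← ker_nonEdgeSum, (LinearMap.quotKerEquivOfSurjective _ nonEdgeSum_surjective).finrank_eq,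
    Module.finrank_fintype_fun_eq_card, Fintype.card_subtype, card_filter_lt_pair (· ∉ K),
    filter_not, card_sdiff_of_subset (filter_subset _ _), card_powersetCard, card_univ,
    Fintype.card_fin, edges]
end
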